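/- arXiv:1403.0292 — 4 statements merged into one kernel-verified Lean document; each statement's English description precedes it below -/
import Mathlib

section
/- Let T(t) be the right-translation semigroup on L²(0,∞), i.e. (T(t)f)(x) = f(x−t) for x ≥ t and 0 otherwise, with generator D. If f ∈ ∩_k dom(D^k) satisfies ‖D^k f‖ ≤ C σ^k for all k ∈ ℕ and some constants C, σ > 0, then f = 0. In other words, every exponential-vector space E_σ(D) of this semigroup is trivial. -/
/-!
Fix `g ∈ L²` vanishing beyond `n` and put `φₖ(t) = ⟪g, T(t) Dᵏ f⟫`. Then `φₖ₊₁` is the right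
derivative of `φₖ`, `|φₖ| ≤ ‖g‖ C σᵏ` because `T(t)` is an isometry, and `φₖ = 0` on `[n, ∞)`
because `T(t)` pushes everything beyond `t`. If all `φₖ` vanish at `s`, the mean value theorem on an
interval of length `1/(2σ)` to the left of `s` trades one power of `σ` for a factor `1/2`; iterating
over `k` shows that all `φₖ` vanish there as well. Walking down to `0` gives `⟪g, f⟫ = φ₀(0) = 0`
for every such `g`, so `f = 0` on `(0, n)` for every `n`.
-/
open Filter Topology MeasureTheory Set

section Translation

variable {E : Type*} [NormedAddCommGroup E]

theorem eLpNorm_translate_restrict_Ioi {u : ℝ → E}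
    (hu : AEStronglyMeasurable u (volume.restrict (Ioi 0))) (p : ENNReal) {t : ℝ} (ht : 0 ≤ t) :
    eLpNorm (fun x => if t ≤ x then u (x - t) else 0) p (volume.restrict (Ioi 0)) =
      eLpNorm u p (volume.restrict (Ioi 0)) := by
  have hshift : MeasurePreserving (· - t) (volume.restrict (Ioi t)) (volume.restrict (Ioi 0)) := by
    simpa using (measurePreserving_sub_right volume t).restrict_preimage
      (measurableSet_Ioi (a := (0 : ℝ)))
  have hsupp : (Ici t ∩ Ioi 0 : Set ℝ) =ᵐ[volume] Ioi t := by
    have h := (ae_eq_refl (Ici t)).inter (Ioi_ae_eq_Ici (a := (0 : ℝ)) (μ := volume))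
    rw [inter_eq_left.2 (Ici_subset_Ici.2 ht)] at h
    exact h.trans Ioi_ae_eq_Ici.symm
  change eLpNorm ((Ici t).indicator (u ∘ (· - t))) p _ = _
  rw [eLpNorm_indicator_eq_eLpNorm_restrict measurableSet_Ici,
    Measure.restrict_restrict measurableSet_Ici, Measure.restrict_congr_set hsupp,
    eLpNorm_comp_measurePreserving hu hshift]

theorem Lp.norm_eq_of_coeFn_ae_eq_translate {p : ENNReal} {u v : Lp E p (volume.restrict (Ioi 0))}
    {t : ℝ} (ht : 0 ≤ t)
    (h : v =ᵐ[volume.restrict (Ioi 0)] fun x => if t ≤ x then u (x - t) else 0) :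
    ‖v‖ = ‖u‖ := by
  rw [Lp.norm_def, Lp.norm_def, eLpNorm_congr_ae h,
    eLpNorm_translate_restrict_Ioi (Lp.aestronglyMeasurable u) p ht]

end Translation

theorem hasDerivWithinAt_Ici_semigroup_orbit {E : Type*} [NormedAddCommGroup E] [NormedSpace ℝ E]
    (T : ℝ → E →L[ℝ] E) (hTadd : ∀ s t : ℝ, 0 ≤ s → 0 ≤ t → T (s + t) = (T s).comp (T t))
    {u v : E} (hgen : Tendsto (fun h : ℝ => h⁻¹ • (T h u - u)) (𝓝[>] 0) (𝓝 v))
    {t : ℝ} (ht : 0 ≤ t) :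
    HasDerivWithinAt (fun s => T s u) (T t v) (Ici t) t := by
  have hshift : Tendsto (· - t) (𝓝[>] t) (𝓝[>] 0) :=
    tendsto_nhdsWithin_iff.2
      ⟨by simpa using ((continuous_sub_right t).tendsto t).mono_left nhdsWithin_le_nhds,
        eventually_nhdsWithin_of_forall (fun _ hx => sub_pos.2 (mem_Ioi.1 hx))⟩
  rw [← hasDerivWithinAt_Ioi_iff_Ici, hasDerivWithinAt_iff_tendsto_slope' self_notMem_Ioi]
  refine (((T t).continuous.tendsto v).comp (hgen.comp hshift)).congr' ?_
  filter_upwards [self_mem_nhdsWithin] with x hx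
  have hTx : T x u = T t (T (x - t) u) := by
    rw [← ContinuousLinearMap.comp_apply, ← hTadd t (x - t) ht (sub_nonneg.2 (le_of_lt hx)),
      add_sub_cancel]
  simp [slope_def_module, hTx]

section Vanishing

variable {E : Type*} [NormedAddCommGroup E] [NormedSpace ℝ E] {φ : ℕ → ℝ → E} {M σ : ℝ}

theorem forall_ge_sub_eq_zero_of_forall_ge_eq_zero (hσ : 0 < σ)
    (hcont : ∀ k, ContinuousOn (φ k) (Ici 0))
    (hderiv : ∀ k t, 0 ≤ t → HasDerivWithinAt (φ k) (φ (k + 1) t) (Ici t) t)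
    (hbound : ∀ k t, 0 ≤ t → ‖φ k t‖ ≤ M * σ ^ k) {s : ℝ}
    (hs : ∀ k t, 0 ≤ t → s ≤ t → φ k t = 0) :
    ∀ k t, 0 ≤ t → s - (2 * σ)⁻¹ ≤ t → φ k t = 0 := by
  intro k t ht hst
  rcases le_or_gt s t with hts | hts
  · exact hs k t ht hts
  have hM : 0 ≤ M := by simpa using (norm_nonneg _).trans (hbound 0 0 le_rfl)
  have hhalving : ∀ n k, ∀ x ∈ Icc t s, ‖φ k x‖ ≤ M * σ ^ k / 2 ^ n := by
    intro n
    induction n with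
    | zero =>
      intro k x hx
      simpa using hbound k x (ht.trans hx.1)
    | succ n ih =>
      intro k x hx
      have hx0 : 0 ≤ x := ht.trans hx.1
      have hmvt := norm_image_sub_le_of_norm_deriv_right_le_segment
        ((hcont k).mono (Icc_subset_Ici_iff hx.2 |>.2 hx0))
        (fun y hy => hderiv k y (hx0.trans hy.1))
        (fun y hy => ih (k + 1) y ⟨hx.1.trans hy.1, hy.2.le⟩) s ⟨hx.2, le_rfl⟩
      rw [hs k s (hx0.trans hx.2) le_rfl, zero_sub, norm_neg] at hmvt
      calc ‖φ k x‖ ≤ M * σ ^ (k + 1) / 2 ^ n * (s - x) := hmvt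
        _ ≤ M * σ ^ (k + 1) / 2 ^ n * (2 * σ)⁻¹ := by gcongr; linarith [hx.1]
        _ = M * σ ^ k / 2 ^ (n + 1) := by field_simp; ring
  have hlim : Tendsto (fun n : ℕ => M * σ ^ k / 2 ^ n) atTop (𝓝 0) :=
    tendsto_const_nhds.div_atTop (tendsto_pow_atTop_atTop_of_one_lt one_lt_two)
  exact norm_le_zero_iff.1 <|
    ge_of_tendsto' hlim fun n => hhalving n k t ⟨le_rfl, hts.le⟩

theorem forall_eq_zero_of_forall_ge_eq_zero (hσ : 0 < σ)
    (hcont : ∀ k, ContinuousOn (φ k) (Ici 0))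
    (hderiv : ∀ k t, 0 ≤ t → HasDerivWithinAt (φ k) (φ (k + 1) t) (Ici t) t)
    (hbound : ∀ k t, 0 ≤ t → ‖φ k t‖ ≤ M * σ ^ k) {a : ℝ}
    (ha : ∀ k t, 0 ≤ t → a ≤ t → φ k t = 0) :
    ∀ k t, 0 ≤ t → φ k t = 0 := by
  have hiter : ∀ j : ℕ, ∀ k t, 0 ≤ t → a - j * (2 * σ)⁻¹ ≤ t → φ k t = 0 := by
    intro j
    induction j with
    | zero => simpa using ha
    | succ j ih =>
      intro k t ht hjt
      refine forall_ge_sub_eq_zero_of_forall_ge_eq_zero hσ hcont hderiv hbound ih k t ht ?_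
      push_cast at hjt
      linarith
  obtain ⟨j, hj⟩ := exists_nat_ge (a / (2 * σ)⁻¹)
  intro k t ht
  refine hiter j k t ht ?_
  rw [div_le_iff₀ (by positivity)] at hj
  linarith

end Vanishing

section L2

variable {α 𝕜 E : Type*} [MeasurableSpace α] {μ : Measure α} [RCLike 𝕜]
  [NormedAddCommGroup E] [InnerProductSpace 𝕜 E]

theorem L2.inner_eq_zero_of_ae_eq_zero_or {f g : Lp E 2 μ} (h : ∀ᵐ x ∂μ, f x = 0 ∨ g x = 0) :
    inner 𝕜 f g = 0 := by
  rw [L2.inner_def, integral_eq_zero_of_ae]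
  filter_upwards [h] with x hx
  rcases hx with hx | hx <;> simp [hx]

theorem L2.ae_eq_zero_on_of_forall_inner_eq_zero {s : Set α} (hs : MeasurableSet s) (f : Lp E 2 μ)
    (h : ∀ g : Lp E 2 μ, (∀ᵐ x ∂μ, x ∉ s → g x = 0) → inner 𝕜 g f = 0) :
    ∀ᵐ x ∂μ, x ∈ s → f x = 0 := by
  have hmem : MemLp (s.indicator f) 2 μ := (Lp.memLp f).indicator hs
  set g := hmem.toLp _
  have hg : g =ᵐ[μ] s.indicator f := hmem.coeFn_toLp
  have hgf : inner 𝕜 g f = 0 := h g (by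
    filter_upwards [hg] with x hx hxs
    rw [hx, indicator_of_notMem hxs])
  have hgfg : inner 𝕜 g (f - g) = 0 := by
    refine L2.inner_eq_zero_of_ae_eq_zero_or ?_
    filter_upwards [hg, Lp.coeFn_sub f g] with x hx hsub
    by_cases hxs : x ∈ s
    · right; rw [hsub, Pi.sub_apply, hx, indicator_of_mem hxs, sub_self]
    · left; rw [hx, indicator_of_notMem hxs]
  have hg0 : g = 0 := by
    rw [inner_sub_right, hgf, zero_sub, neg_eq_zero] at hgfg
    exact inner_self_eq_zero.1 hgfg
  filter_upwards [hg, (Lp.coeFn_zero E 2 μ)] with x hx hx0 hxs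
  rw [← indicator_of_mem hxs f, ← hx, hg0, hx0, Pi.zero_apply]

theorem L2.inner_translate_eq_zero {g u v : Lp E 2 (volume.restrict (Ioi (0 : ℝ)))} {a t : ℝ}
    (hg : ∀ᵐ x ∂volume.restrict (Ioi 0), x ∉ Iio a → g x = 0) (hat : a ≤ t)
    (hv : v =ᵐ[volume.restrict (Ioi 0)] fun x => if t ≤ x then u (x - t) else 0) :
    inner 𝕜 g v = 0 := by
  refine L2.inner_eq_zero_of_ae_eq_zero_or ?_
  filter_upwards [hg, hv] with x hgx hvx
  by_cases hxa : x < a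
  · exact Or.inr (by rw [hvx, if_neg (by linarith)])
  · exact Or.inl (hgx hxa)

end L2

theorem stmt6_general
    (T : ℝ → (Lp ℂ 2 (volume.restrict (Set.Ioi (0 : ℝ)))) →L[ℂ]
          (Lp ℂ 2 (volume.restrict (Set.Ioi (0 : ℝ)))))
    (hT0 : T 0 = 1)
    (hTadd : ∀ s t : ℝ, 0 ≤ s → 0 ≤ t → T (s + t) = (T s).comp (T t))
    (hTtrans : ∀ t : ℝ, 0 ≤ t → ∀ f : Lp ℂ 2 (volume.restrict (Set.Ioi (0 : ℝ))),
      (T t f : ℝ → ℂ) =ᵐ[volume.restrict (Set.Ioi (0 : ℝ))]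
        fun x : ℝ => if t ≤ x then f (x - t) else 0)
    (hTcont : ∀ f : Lp ℂ 2 (volume.restrict (Set.Ioi (0 : ℝ))),
      ContinuousOn (fun t : ℝ => T t f) (Set.Ici (0 : ℝ)))
    (f : Lp ℂ 2 (volume.restrict (Set.Ioi (0 : ℝ))))
    (Df : ℕ → Lp ℂ 2 (volume.restrict (Set.Ioi (0 : ℝ))))
    (hDf0 : Df 0 = f)
    (hgen : ∀ k : ℕ,
      Tendsto (fun t : ℝ => (t : ℂ)⁻¹ • (T t (Df k) - Df k)) (nhdsWithin 0 (Set.Ioi 0))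
        (𝓝 (Df (k + 1))))
    (C σ : ℝ) (hσ : 0 < σ)
    (hbound : ∀ k : ℕ, ‖Df k‖ ≤ C * σ ^ k) :
    f = 0 := by
  have hderiv : ∀ k t, 0 ≤ t →
      HasDerivWithinAt (fun s => T s (Df k)) (T t (Df (k + 1))) (Ici t) t := by
    refine fun k t ht => hasDerivWithinAt_Ici_semigroup_orbit (fun t => (T t).restrictScalars ℝ)
      (fun s t hs ht => by rw [hTadd s t hs ht]; rfl) ?_ ht
    refine (hgen k).congr fun h => ?_
    rw [← Complex.ofReal_inv, Complex.coe_smul]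
    rfl
  have hvanish : ∀ n : ℕ, ∀ᵐ x ∂volume.restrict (Ioi 0), x ∈ Iio (n : ℝ) → f x = 0 := by
    refine fun n => L2.ae_eq_zero_on_of_forall_inner_eq_zero (𝕜 := ℂ) measurableSet_Iio f
      fun g hg => ?_
    have horbit_zero : ∀ k t, 0 ≤ t → inner ℂ g (T t (Df k)) = 0 :=
      forall_eq_zero_of_forall_ge_eq_zero hσ (M := ‖g‖ * C) (a := n)
        (fun k => (innerSL ℂ g).continuous.comp_continuousOn (hTcont (Df k)))
        (fun k t ht => ((innerSL ℂ g).restrictScalars ℝ).hasFDerivAt.comp_hasDerivWithinAt t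
          (hderiv k t ht))
        (fun k t ht => calc
          ‖inner ℂ g (T t (Df k))‖ ≤ ‖g‖ * ‖T t (Df k)‖ := norm_inner_le_norm _ _
          _ = ‖g‖ * ‖Df k‖ := by rw [Lp.norm_eq_of_coeFn_ae_eq_translate ht (hTtrans t ht _)]
          _ ≤ ‖g‖ * C * σ ^ k := by rw [mul_assoc]; gcongr; exact hbound k)
        (fun k t ht hnt => L2.inner_translate_eq_zero hg hnt (hTtrans t ht (Df k)))
    simpa [hT0, hDf0] using horbit_zero 0 0 le_rfl
  rw [Lp.eq_zero_iff_ae_eq_zero]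
  filter_upwards [ae_all_iff.2 hvanish] with x hx
  obtain ⟨n, hn⟩ := exists_nat_gt x
  exact hx n hn

/-- Let `T(t)` be the right-translation semigroup on `L²(0,∞)`
(`(T(t)f)(x) = f(x-t)` for `x ≥ t`, `0` otherwise) with generator `D`.  If
`f ∈ ∩_k dom(D^k)` (encoded by the chain `Df` with `Df (k+1) = D (Df k)` via the
strong-limit definition of the generator) satisfies `‖D^k f‖ ≤ C σ^k` for all `k`,
then `f = 0`: every exponential-vector space of this semigroup is trivial. -/
theorem stmt6
    (T : ℝ → (Lp ℂ 2 (volume.restrict (Set.Ioi (0 : ℝ)))) →L[ℂ]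
          (Lp ℂ 2 (volume.restrict (Set.Ioi (0 : ℝ)))))
    (hT0 : T 0 = 1)
    (hTadd : ∀ s t : ℝ, 0 ≤ s → 0 ≤ t → T (s + t) = (T s).comp (T t))
    (hTtrans : ∀ t : ℝ, 0 ≤ t → ∀ f : Lp ℂ 2 (volume.restrict (Set.Ioi (0 : ℝ))),
      (T t f : ℝ → ℂ) =ᵐ[volume.restrict (Set.Ioi (0 : ℝ))]
        fun x : ℝ => if t ≤ x then f (x - t) else 0)
    (hTcont : ∀ f : Lp ℂ 2 (volume.restrict (Set.Ioi (0 : ℝ))),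
      ContinuousOn (fun t : ℝ => T t f) (Set.Ici (0 : ℝ)))
    (f : Lp ℂ 2 (volume.restrict (Set.Ioi (0 : ℝ))))
    (Df : ℕ → Lp ℂ 2 (volume.restrict (Set.Ioi (0 : ℝ))))
    (hDf0 : Df 0 = f)
    (hgen : ∀ k : ℕ,
      Tendsto (fun t : ℝ => (t : ℂ)⁻¹ • (T t (Df k) - Df k)) (nhdsWithin 0 (Set.Ioi 0))
        (𝓝 (Df (k + 1))))
    (C σ : ℝ) (hC : 0 < C) (hσ : 0 < σ)
    (hbound : ∀ k : ℕ, ‖Df k‖ ≤ C * σ ^ k) :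
    f = 0 :=
  stmt6_general T hT0 hTadd hTtrans hTcont f Df hDf0 hgen C σ hσ hbound
end

section
/- For every n ∈ ℕ and every nonzero real x, the n-th derivative of the sinc function sinc(x) = sin(πx)/(πx) satisfies |sinc^{(n)}(x)| ≤ C/|x| for a constant C depending only on n. -/
/-!
Differentiating `x * sinc x = sin (π x) / π` with Leibniz' rule gives
`x * sinc⁽ⁿ⁺¹⁾ x = π ^ n * sin⁽ⁿ⁺¹⁾ (π x) - (n + 1) * sinc⁽ⁿ⁾ x`, so by induction `x * sinc⁽ⁿ⁾ x`
is bounded on `|x| ≥ 1` (where `|sinc⁽ⁿ⁾ x| ≤ |x * sinc⁽ⁿ⁾ x|`). On `[-1, 1]` the continuous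
function `sinc⁽ⁿ⁾` is bounded by compactness, and there `1 ≤ 1 / |x|`. Smoothness of `sinc` comes
from writing it as `dslope sin 0` rescaled, which is analytic.
-/

open Filter Topology

/-- `sinc x = sin(πx)/(πx)` for `x ≠ 0`, `sinc 0 = 1`. -/
noncomputable def sinc (x : ℝ) : ℝ :=
  if x = 0 then 1 else Real.sin (Real.pi * x) / (Real.pi * x)

open scoped ContDiff

theorem AnalyticAt.dslope {𝕜 E : Type*} [NontriviallyNormedField 𝕜] [NormedAddCommGroup E]
    [NormedSpace 𝕜 E] {f : 𝕜 → E} {a x : 𝕜} (hf : AnalyticAt 𝕜 f x) :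
    AnalyticAt 𝕜 (dslope f a) x := by
  rcases eq_or_ne x a with rfl | hxa
  · obtain ⟨p, hp⟩ := hf
    exact ⟨_, hp.has_fpower_series_dslope_fslope⟩
  · refine AnalyticAt.congr ?_
      (eventually_ne_nhds hxa |>.mono fun y hy => (dslope_of_ne f hy).symm)
    rw [show slope f a = fun y => (y - a)⁻¹ • (f y - f a) from funext (slope_def_module f a)]
    exact ((analyticAt_id.sub analyticAt_const).inv (sub_ne_zero.2 hxa)).smul
      (hf.sub analyticAt_const)

theorem iteratedDeriv_succ_fun_id_mul {𝕜 : Type*} [NontriviallyNormedField 𝕜] {f : 𝕜 → 𝕜}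
    {n : ℕ} {x : 𝕜} (hf : ContDiffAt 𝕜 (n + 1 : ℕ) f x) :
    iteratedDeriv (n + 1) (fun y => y * f y) x
      = x * iteratedDeriv (n + 1) f x + (n + 1) * iteratedDeriv n f x := by
  rw [iteratedDeriv_fun_mul (f := fun y => y) contDiffAt_fun_id hf, Finset.sum_range_succ',
    Finset.sum_range_succ']
  simp [iteratedDeriv_fun_id, add_comm]

theorem exists_abs_le_div_abs_of_abs_mul_le {f : ℝ → ℝ} (hf : Continuous f) {B : ℝ}
    (hB : ∀ x, 1 ≤ |x| → |x * f x| ≤ B) :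
    ∃ C, 0 < C ∧ ∀ x, x ≠ 0 → |f x| ≤ C / |x| := by
  obtain ⟨M, hM⟩ := (isCompact_Icc (a := -1) (b := 1)).exists_bound_of_continuousOn
    hf.continuousOn
  refine ⟨|M| + |B| + 1, by positivity, fun x hx => ?_⟩
  rw [le_div_iff₀ (abs_pos.2 hx)]
  rcases le_or_gt |x| 1 with hx₁ | hx₁
  · have : |f x| ≤ M := by simpa using hM x (abs_le.1 hx₁)
    nlinarith [le_abs_self M, abs_nonneg B, abs_nonneg (f x)]
  · have : |x| * |f x| ≤ B := by simpa [abs_mul] using hB x hx₁.le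
    nlinarith [le_abs_self B, abs_nonneg M, abs_nonneg (f x)]

theorem exists_abs_mul_iteratedDeriv_le {f : ℝ → ℝ} (hf : ContDiff ℝ ∞ f)
    (hg : ∀ n, ∃ B, ∀ x, |iteratedDeriv n (fun y => y * f y) x| ≤ B) (n : ℕ) :
    ∃ B, ∀ x, 1 ≤ |x| → |x * iteratedDeriv n f x| ≤ B := by
  induction n with
  | zero =>
    obtain ⟨B, hB⟩ := hg 0
    exact ⟨B, fun x _ => by simpa using hB x⟩
  | succ n ih =>
    obtain ⟨B, hB⟩ := ih
    obtain ⟨B', hB'⟩ := hg (n + 1)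
    refine ⟨B' + (n + 1) * B, fun x hx => ?_⟩
    have hfn : |iteratedDeriv n f x| ≤ B :=
      calc |iteratedDeriv n f x| ≤ |x| * |iteratedDeriv n f x| :=
            le_mul_of_one_le_left (abs_nonneg _) hx
        _ ≤ B := by simpa [abs_mul] using hB x hx
    have hleibniz := iteratedDeriv_succ_fun_id_mul (x := x) (n := n)
      (hf.contDiffAt.of_le (by exact_mod_cast le_top))
    calc |x * iteratedDeriv (n + 1) f x|
        = |iteratedDeriv (n + 1) (fun y => y * f y) x - (n + 1) * iteratedDeriv n f x| := by
          rw [hleibniz, add_sub_cancel_right]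
      _ ≤ |iteratedDeriv (n + 1) (fun y => y * f y) x| + (n + 1) * |iteratedDeriv n f x| := by
          refine (abs_sub _ _).trans_eq ?_
          rw [abs_mul, abs_of_pos (by positivity : (0 : ℝ) < n + 1)]
      _ ≤ B' + (n + 1) * B := by gcongr; exact hB' x

theorem exists_abs_iteratedDeriv_le_div_abs {f : ℝ → ℝ} (hf : ContDiff ℝ ∞ f)
    (hg : ∀ n, ∃ B, ∀ x, |iteratedDeriv n (fun y => y * f y) x| ≤ B) (n : ℕ) :
    ∃ C, 0 < C ∧ ∀ x, x ≠ 0 → |iteratedDeriv n f x| ≤ C / |x| :=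
  have ⟨_, hB⟩ := exists_abs_mul_iteratedDeriv_le hf hg n
  exists_abs_le_div_abs_of_abs_mul_le (hf.continuous_iteratedDeriv n (by exact_mod_cast le_top)) hB

theorem sinc_eq_realSinc_pi_mul : sinc = fun x => Real.sinc (Real.pi * x) := by
  funext x
  simp [sinc, Real.sinc, Real.pi_ne_zero]

theorem contDiff_sinc : ContDiff ℝ ∞ sinc := by
  have hsinc : AnalyticOnNhd ℝ Real.sinc Set.univ := fun x _ => by
    rw [Real.sinc_eq_dslope]
    exact Real.analyticAt_sin.dslope
  rw [sinc_eq_realSinc_pi_mul]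
  exact hsinc.contDiff.comp (contDiff_const.mul contDiff_id)

theorem mul_sinc_eq_sin_div_pi (x : ℝ) : x * sinc x = Real.sin (Real.pi * x) / Real.pi := by
  rcases eq_or_ne x 0 with rfl | hx
  · simp
  · rw [sinc, if_neg hx]
    field_simp

theorem abs_iteratedDeriv_mul_sinc_le (n : ℕ) (x : ℝ) :
    |iteratedDeriv n (fun y => y * sinc y) x| ≤ Real.pi ^ n / Real.pi := by
  simp only [mul_sinc_eq_sin_div_pi, iteratedDeriv_div_const,
    iteratedDeriv_comp_const_mul (Real.contDiff_sin (n := n)), abs_div, abs_mul, abs_pow,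
    abs_of_pos Real.pi_pos]
  gcongr
  exact mul_le_of_le_one_right (by positivity) (Real.abs_iteratedDeriv_sin_le_one n _)

/-- For every `n ∈ ℕ` there is a constant `C > 0` (depending only on `n`)
such that `|sinc^{(n)}(x)| ≤ C/|x|` for all real `x ≠ 0`. -/
theorem stmt7 :
    ∀ n : ℕ, ∃ C : ℝ, 0 < C ∧ ∀ x : ℝ, x ≠ 0 → |iteratedDeriv n sinc x| ≤ C / |x| :=
  exists_abs_iteratedDeriv_le_div_abs contDiff_sinc fun n => ⟨_, abs_iteratedDeriv_mul_sinc_le n⟩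
end

section
/- Let F : ℝ → ℂ be the restriction of an entire function of exponential type σ > 0 that is bounded on ℝ. Define F₁(t) = (F(t) − F(0))/t for t ≠ 0 and F₁(0) = F'(0). Then F₁ is the restriction of an entire function of exponential type σ and F₁ ∈ L²(ℝ), i.e. F₁ belongs to the Bernstein space B²_σ(ℝ). -/
open Filter Topology MeasureTheory

/-!
`F₁` is the `dslope` of `F` at `0`, hence entire. On the closed unit disc it is bounded by
compactness; off it, `‖F₁ z‖ ≤ ‖F z‖ + ‖F 0‖`, which gives the type bound, and on the real line
`‖F₁ t‖ ≤ 2M / |t|`. Together, `‖F₁ t‖ ≤ K / (1 + |t|)` on `ℝ`, which is square integrable.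
-/

theorem norm_dslope_le_of_ne {𝕜 E : Type*} [NontriviallyNormedField 𝕜] [NormedAddCommGroup E]
    [NormedSpace 𝕜 E] (f : 𝕜 → E) {a z : 𝕜} (hz : z ≠ a) :
    ‖dslope f a z‖ ≤ (‖f z‖ + ‖f a‖) / ‖z - a‖ := by
  rw [dslope_of_ne f hz, slope, vsub_eq_sub, norm_smul, norm_inv, inv_mul_eq_div]
  gcongr
  exact norm_sub_le _ _

theorem norm_dslope_zero_le_of_one_le_norm {E : Type*} [NormedAddCommGroup E] [NormedSpace ℂ E]
    (f : ℂ → E) {z : ℂ} (hz : 1 ≤ ‖z‖) : ‖dslope f 0 z‖ ≤ (‖f z‖ + ‖f 0‖) / ‖z‖ := by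
  simpa using norm_dslope_le_of_ne f (a := 0) (norm_pos_iff.mp (one_pos.trans_le hz))

section

variable {E : Type*} [NormedAddCommGroup E] [NormedSpace ℂ E] [CompleteSpace E]

theorem Differentiable.dslope {f : ℂ → E} (hf : Differentiable ℂ f) (c : ℂ) :
    Differentiable ℂ (dslope f c) :=
  differentiableOn_univ.mp ((Complex.differentiableOn_dslope univ_mem).2 hf.differentiableOn)

theorem exists_norm_dslope_zero_le_of_norm_le_one {f : ℂ → E} (hf : Differentiable ℂ f) :
    ∃ C, ∀ z : ℂ, ‖z‖ ≤ 1 → ‖dslope f 0 z‖ ≤ C := by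
  obtain ⟨C, hC⟩ := (isCompact_closedBall (0 : ℂ) 1).exists_bound_of_continuousOn
    (hf.dslope 0).continuous.continuousOn
  exact ⟨C, fun z hz => hC z (by simpa using hz)⟩

theorem exists_norm_dslope_zero_le_mul_exp {f : ℂ → E} (hf : Differentiable ℂ f) {σ A : ℝ}
    (hσ : 0 ≤ σ) (hA : ∀ z : ℂ, ‖f z‖ ≤ A * Real.exp (σ * ‖z‖)) :
    ∃ A' : ℝ, ∀ z : ℂ, ‖dslope f 0 z‖ ≤ A' * Real.exp (σ * ‖z‖) := by
  obtain ⟨C, hC⟩ := exists_norm_dslope_zero_le_of_norm_le_one hf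
  have hA0 : ‖f 0‖ ≤ A := by simpa using hA 0
  have hC0 : 0 ≤ C := (norm_nonneg _).trans (hC 0 (by simp))
  refine ⟨C + 2 * A, fun z => ?_⟩
  have hexp : 1 ≤ Real.exp (σ * ‖z‖) := Real.one_le_exp_iff.mpr (by positivity)
  have hA_le : A ≤ A * Real.exp (σ * ‖z‖) :=
    le_mul_of_one_le_right ((norm_nonneg _).trans hA0) hexp
  rcases le_or_gt ‖z‖ 1 with hz | hz
  · nlinarith [hC z hz, (norm_nonneg _).trans hA0]
  · calc ‖dslope f 0 z‖ ≤ (‖f z‖ + ‖f 0‖) / ‖z‖ := norm_dslope_zero_le_of_one_le_norm f hz.le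
      _ ≤ ‖f z‖ + ‖f 0‖ := div_le_self (by positivity) hz.le
      _ ≤ A * Real.exp (σ * ‖z‖) + A * Real.exp (σ * ‖z‖) := add_le_add (hA z) (hA0.trans hA_le)
      _ ≤ (C + 2 * A) * Real.exp (σ * ‖z‖) := by nlinarith

theorem exists_norm_dslope_zero_le_div_one_add_abs {f : ℂ → E} (hf : Differentiable ℂ f) {M : ℝ}
    (hM : ∀ t : ℝ, ‖f t‖ ≤ M) :
    ∃ K : ℝ, ∀ t : ℝ, ‖dslope f 0 t‖ ≤ K / (1 + |t|) := by
  obtain ⟨C, hC⟩ := exists_norm_dslope_zero_le_of_norm_le_one hf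
  have hM0 : 0 ≤ M := (norm_nonneg _).trans (hM 0)
  refine ⟨2 * C + 4 * M, fun t => ?_⟩
  have hnorm : ‖(t : ℂ)‖ = |t| := Complex.norm_real t
  rw [le_div_iff₀ (by positivity)]
  rcases le_or_gt |t| 1 with ht | ht
  · have h := hC t (hnorm ▸ ht)
    nlinarith [norm_nonneg (dslope f 0 t), abs_nonneg t]
  · have h := norm_dslope_zero_le_of_one_le_norm f (z := t) (hnorm ▸ ht.le)
    rw [hnorm, le_div_iff₀ (by linarith)] at h
    have hf0 : ‖f 0‖ ≤ M := by simpa using hM 0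
    have hC0 : 0 ≤ C := (norm_nonneg _).trans (hC 0 (by simp))
    nlinarith [hM t, norm_nonneg (dslope f 0 t)]

end

theorem memLp_two_of_norm_le_div_one_add_abs {E : Type*} [NormedAddCommGroup E] {g : ℝ → E}
    (hg : AEStronglyMeasurable g volume) {K : ℝ} (hK : ∀ t, ‖g t‖ ≤ K / (1 + |t|)) :
    MemLp g 2 volume := by
  rw [memLp_two_iff_integrable_sq_norm hg]
  refine (integrable_inv_one_add_sq.const_mul (K ^ 2)).mono' (by fun_prop)
    (ae_of_all _ fun t => ?_)
  have hsq : 1 + t ^ 2 ≤ (1 + |t|) ^ 2 := by nlinarith [abs_nonneg t, sq_abs t]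
  calc ‖‖g t‖ ^ 2‖ = ‖g t‖ ^ 2 := by simp
    _ ≤ (K / (1 + |t|)) ^ 2 := pow_le_pow_left₀ (norm_nonneg _) (hK t) 2
    _ = K ^ 2 / (1 + |t|) ^ 2 := div_pow _ _ _
    _ ≤ K ^ 2 * (1 + t ^ 2)⁻¹ := by
      rw [← div_eq_mul_inv]; exact div_le_div_of_nonneg_left (sq_nonneg K) (by positivity) hsq

/-- Let `F` be an entire function of exponential type `σ > 0` that is bounded
on the real line, and let `F₁(z) = (F(z) − F(0))/z` for `z ≠ 0`, `F₁(0) = F'(0)`.  Then `F₁`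
is entire of exponential type `σ` and its restriction to `ℝ` is in `L²(ℝ)`, i.e.
`F₁ ∈ B²_σ(ℝ)`. -/
theorem stmt8 (σ : ℝ) (hσ : 0 < σ) (F : ℂ → ℂ)
    (hent : Differentiable ℂ F)
    (htype : ∃ A : ℝ, ∀ z : ℂ, ‖F z‖ ≤ A * Real.exp (σ * ‖z‖))
    (hbdd : ∃ M : ℝ, ∀ t : ℝ, ‖F (t : ℂ)‖ ≤ M)
    (F₁ : ℂ → ℂ)
    (hF₁ : F₁ = fun z : ℂ => if z = 0 then deriv F 0 else (F z - F 0) / z) :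
    Differentiable ℂ F₁ ∧
    (∃ A : ℝ, ∀ z : ℂ, ‖F₁ z‖ ≤ A * Real.exp (σ * ‖z‖)) ∧
    MemLp (fun t : ℝ => F₁ (t : ℂ)) 2 volume := by
  have hds : F₁ = dslope F 0 := by
    funext z
    rcases eq_or_ne z 0 with rfl | hz
    · simp [hF₁]
    · simp [hF₁, hz, dslope_of_ne, slope_def_field]
  subst hds
  obtain ⟨A, hA⟩ := htype
  obtain ⟨M, hM⟩ := hbdd
  obtain ⟨K, hK⟩ := exists_norm_dslope_zero_le_div_one_add_abs hent hM
  exact ⟨hent.dslope 0, exists_norm_dslope_zero_le_mul_exp hent hσ.le hA,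
    memLp_two_of_norm_le_div_one_add_abs
      ((hent.dslope 0).continuous.comp Complex.continuous_ofReal).aestronglyMeasurable hK⟩
end

section
/- Let E be a Hilbert space and D a self-adjoint operator with associated direct-integral spectral representation F_D : E → ∫ A(λ) dm(λ) satisfying F_D(Df)(λ) = λ F_D(f)(λ). Then f ∈ B_σ(D) (i.e. f ∈ ∩_k dom(D^k) with ‖D^k f‖ ≤ σ^k‖f‖ for all k) if and only if the support of F_D f is contained in [−σ, σ]. Equivalently, f ∈ B_σ(D) iff the spectral measure ⟨P_Ω f, f⟩ of f is supported in [−σ, σ]. -/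
/-!
On the spectral side `D^k f` is `h^k g` with `g = F f`. If `g` vanishes a.e. where `|h| > σ`, then
`‖h^k g‖ ≤ σ^k ‖g‖` pointwise, which gives the iterates and their bounds. Conversely, on
`{t ≤ |h|}` with `t > σ` one has `‖g‖ ≤ t^{-k} ‖h^k g‖`, so the `L²` norm of `g` there is at most
`(σ/t)^k ‖f‖ → 0`; letting `t ↓ σ` along a sequence gives the vanishing on `{σ < |h|}`.
-/

open Filter Topology MeasureTheory

namespace MeasureTheory

variable {X 𝕜 : Type*} [MeasurableSpace X] {μ : Measure X} [NormedField 𝕜] {p : ENNReal}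

theorem ae_lt_imp_of_forall_le_imp {u : X → ℝ} {P : X → Prop} {σ : ℝ}
    (hP : ∀ t, σ < t → ∀ᵐ x ∂μ, t ≤ u x → P x) : ∀ᵐ x ∂μ, σ < u x → P x := by
  have hall : ∀ᵐ x ∂μ, ∀ n : ℕ, σ + 1 / (n + 1) ≤ u x → P x :=
    ae_all_iff.mpr fun n => hP _ (lt_add_of_pos_right _ (by positivity))
  filter_upwards [hall] with x hx hσx
  obtain ⟨n, hn⟩ := exists_nat_one_div_lt (sub_pos.mpr hσx)
  exact hx n (by linarith)

theorem ae_eq_pow_mul_of_ae_eq_mul {u : ℕ → X → 𝕜} {h : X → 𝕜}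
    (hu : ∀ k, u (k + 1) =ᵐ[μ] fun x => h x * u k x) (k : ℕ) :
    u k =ᵐ[μ] fun x => h x ^ k * u 0 x := by
  induction k with
  | zero => simp
  | succ k ih =>
    filter_upwards [hu k, ih] with x hsucc hk
    rw [hsucc, hk, pow_succ]
    ring

theorem eLpNorm_restrict_le_pow_mul {h g : X → 𝕜} {s : Set X} {t : ℝ} (ht : 0 < t)
    (hs : NullMeasurableSet s μ) (hts : ∀ x ∈ s, t ≤ ‖h x‖) (k : ℕ) :
    eLpNorm g p (μ.restrict s) ≤
      ENNReal.ofReal (t⁻¹ ^ k) * eLpNorm (fun x => h x ^ k * g x) p μ := by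
  have hpt : ∀ᵐ x ∂μ.restrict s, ‖g x‖ ≤ t⁻¹ ^ k * ‖h x ^ k * g x‖ := by
    filter_upwards [ae_restrict_mem₀ hs] with x hx
    rw [norm_mul, norm_pow, ← mul_assoc, ← mul_pow]
    exact le_mul_of_one_le_left (norm_nonneg _)
      (one_le_pow₀ ((one_le_inv_mul₀ ht).mpr (hts x hx)))
  calc eLpNorm g p (μ.restrict s)
      ≤ ENNReal.ofReal (t⁻¹ ^ k) * eLpNorm (fun x => h x ^ k * g x) p (μ.restrict s) :=
        eLpNorm_le_mul_eLpNorm_of_ae_le_mul hpt p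
    _ ≤ ENNReal.ofReal (t⁻¹ ^ k) * eLpNorm (fun x => h x ^ k * g x) p μ := by
        gcongr
        exact Measure.restrict_le_self

theorem ae_eq_zero_of_eLpNorm_pow_mul_le {h g : X → 𝕜} (hh : AEStronglyMeasurable h μ)
    (hg : AEStronglyMeasurable g μ) (hp : p ≠ 0) {σ C : ℝ} (hσ : 0 ≤ σ)
    (hbound : ∀ k : ℕ, eLpNorm (fun x => h x ^ k * g x) p μ ≤ ENNReal.ofReal (σ ^ k * C)) :
    ∀ᵐ x ∂μ, σ < ‖h x‖ → g x = 0 := by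
  refine ae_lt_imp_of_forall_le_imp fun t hσt => ?_
  have ht : 0 < t := hσ.trans_lt hσt
  set s := {x | t ≤ ‖h x‖}
  have hs : NullMeasurableSet s μ := nullMeasurableSet_le aemeasurable_const hh.norm.aemeasurable
  have hsmall : ∀ k : ℕ, eLpNorm g p (μ.restrict s) ≤ ENNReal.ofReal ((σ / t) ^ k * C) :=
    fun k => calc
      eLpNorm g p (μ.restrict s)
          ≤ ENNReal.ofReal (t⁻¹ ^ k) * eLpNorm (fun x => h x ^ k * g x) p μ :=
            eLpNorm_restrict_le_pow_mul ht hs (fun _ hx => hx) k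
      _ ≤ ENNReal.ofReal (t⁻¹ ^ k) * ENNReal.ofReal (σ ^ k * C) := by gcongr; exact hbound k
      _ = ENNReal.ofReal ((σ / t) ^ k * C) := by
          rw [← ENNReal.ofReal_mul (by positivity), div_pow, div_eq_inv_mul, inv_pow, mul_assoc]
  have hlim : Tendsto (fun k : ℕ => ENNReal.ofReal ((σ / t) ^ k * C)) atTop (𝓝 0) := by
    have hratio : |σ / t| < 1 := by
      rwa [abs_of_nonneg (by positivity), div_lt_one ht]
    simpa using ENNReal.tendsto_ofReal
      ((tendsto_pow_atTop_nhds_zero_of_abs_lt_one hratio).mul_const C)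
  have hzero : eLpNorm g p (μ.restrict s) = 0 := nonpos_iff_eq_zero.mp (ge_of_tendsto' hlim hsmall)
  exact (ae_restrict_iff'₀ hs).mp ((eLpNorm_eq_zero_iff hg.restrict hp).mp hzero)

theorem ae_norm_pow_mul_le {h g : X → 𝕜} {σ : ℝ}
    (hvan : ∀ᵐ x ∂μ, σ < ‖h x‖ → g x = 0) (k : ℕ) :
    ∀ᵐ x ∂μ, ‖h x ^ k * g x‖ ≤ σ ^ k * ‖g x‖ := by
  filter_upwards [hvan] with x hx
  rcases lt_or_ge σ ‖h x‖ with hlt | hle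
  · simp [hx hlt]
  · rw [norm_mul, norm_pow]
    gcongr

end MeasureTheory

/-- Let `E` be a Hilbert space and `D` a self-adjoint operator given in its
spectral (direct-integral / multiplication-operator) representation: a unitary
`F : E ≃ L²(X, μ)` and a measurable real function `h` (the spectral variable `λ`) such that
applying `D` corresponds to multiplication by `h`.  Then `f ∈ B_σ(D)` — i.e. there is a chain
`Df : ℕ → E` of iterates `D^k f` (multiplication by `h` on the spectral side) with
`‖D^k f‖ ≤ σ^k ‖f‖` for all `k` — if and only if the support of `F f` is contained in
`{|λ| ≤ σ}`, i.e. `F f` vanishes a.e. on `{x : σ < |h x|}`. -/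
theorem stmt18 {E : Type*} [NormedAddCommGroup E] [InnerProductSpace ℂ E] [CompleteSpace E]
    {X : Type*} [MeasurableSpace X] (μ : Measure X)
    (h : X → ℝ) (hmeas : Measurable h)
    (F : E ≃ₗᵢ[ℂ] Lp ℂ 2 μ)
    (σ : ℝ) (hσ : 0 < σ) (f : E) :
    (∃ Df : ℕ → E, Df 0 = f ∧
        (∀ k : ℕ, (F (Df (k + 1)) : X → ℂ) =ᵐ[μ] fun x => (h x : ℂ) * (F (Df k) : X → ℂ) x) ∧
        (∀ k : ℕ, ‖Df k‖ ≤ σ ^ k * ‖f‖)) ↔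
      (∀ᵐ x ∂μ, σ < |h x| → (F f : X → ℂ) x = 0) := by
  have hh : AEStronglyMeasurable (fun x => (h x : ℂ)) μ :=
    (Complex.measurable_ofReal.comp hmeas).aestronglyMeasurable
  have hnorm : ∀ x, ‖(h x : ℂ)‖ = |h x| := fun x => by rw [Complex.norm_real, Real.norm_eq_abs]
  constructor
  · rintro ⟨Df, rfl, hrec, hbound⟩
    have hpow := ae_eq_pow_mul_of_ae_eq_mul (u := fun k => (F (Df k) : X → ℂ)) hrec
    refine (ae_eq_zero_of_eLpNorm_pow_mul_le hh (Lp.aestronglyMeasurable _) two_ne_zero hσ.le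
      (C := ‖Df 0‖) fun k => ?_).mono fun x hx => by rwa [hnorm] at hx
    rw [← eLpNorm_congr_ae (hpow k), ← Lp.enorm_def, ← ofReal_norm, F.norm_map]
    exact ENNReal.ofReal_le_ofReal (hbound k)
  · intro hvan
    have hle := ae_norm_pow_mul_le (μ := μ) (h := fun x => (h x : ℂ)) (σ := σ)
      (hvan.mono fun x hx => by rwa [hnorm])
    have hmem : ∀ k : ℕ, MemLp (fun x => (h x : ℂ) ^ k * (F f : X → ℂ) x) 2 μ := fun k =>
      (Lp.memLp (F f)).of_le_mul ((hh.pow k).mul (Lp.aestronglyMeasurable _)) (hle k)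
    refine ⟨fun k => F.symm ((hmem k).toLp _), ?_, fun k => ?_, fun k => ?_⟩
    · rw [F.symm_apply_eq]
      exact (MemLp.toLp_congr _ (Lp.memLp _) (by simp)).trans (Lp.toLp_coeFn _ _)
    · simp only [LinearIsometryEquiv.apply_symm_apply]
      filter_upwards [(hmem (k + 1)).coeFn_toLp, (hmem k).coeFn_toLp] with x hsucc hk
      rw [hsucc, hk, pow_succ]
      ring
    · rw [← ENNReal.ofReal_le_ofReal_iff (by positivity), ofReal_norm, F.symm.enorm_map,
        Lp.enorm_toLp, ENNReal.ofReal_mul (by positivity), ← F.norm_map, ofReal_norm,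
        Lp.enorm_def]
      exact eLpNorm_le_mul_eLpNorm_of_ae_le_mul (hle k) 2
end
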